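/- Let S = {a₁,a₂} × {b₁,b₂} be the 2×2 rectangular band and F a field. The map φ: J ↦ ϱ_J (where s ϱ_J t iff s − t ∈ J) from ideals of F[S] to congruences of S satisfies: φ({0}) = φ(J_L ∩ J_R) = identity congruence, φ(J_L) = α_L, φ(J_R) = α_R, φ(F[ω_S]) = φ(F[S]) = universal congruence, and φ(J₁ + J₂) = φ(J₁) ∨ φ(J₂) for all ideals J₁, J₂. -/

import Mathlib

inductive L2 : Type | a1 | a2
deriving DecidableEq

instance : Fintype L2 := ⟨{L2.a1, L2.a2}, fun x => by cases x <;> simp⟩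

instance : Semigroup L2 where
  mul x _ := x
  mul_assoc _ _ _ := rfl

inductive R2 : Type | b1 | b2
deriving DecidableEq

instance : Fintype R2 := ⟨{R2.b1, R2.b2}, fun x => by cases x <;> simp⟩

instance : Semigroup R2 where
  mul _ y := y
  mul_assoc _ _ _ := rfl

abbrev RB : Type := L2 × R2

def IsTwoSidedIdeal {F A : Type*} [Field F] [NonUnitalNonAssocSemiring A]
    [Module F A] (J : Submodule F A) : Prop :=
  ∀ a x : A, x ∈ J → a * x ∈ J ∧ x * a ∈ J

variable (F : Type*) [Field F]

/-- The sum-of-coefficients (augmentation) linear map on `F[S]`. -/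
noncomputable def coeffSum : MonoidAlgebra F RB →ₗ[F] F where
  toFun x := ∑ s : RB, x.coeff s
  map_add' x y := by
    simp only [show ∀ s, (x + y).coeff s = x.coeff s + y.coeff s from fun _ => rfl, Finset.sum_add_distrib]
  map_smul' c x := by
    simp only [show ∀ s, (c • x).coeff s = c * x.coeff s from fun _ => rfl, Finset.mul_sum,
      RingHom.id_apply, smul_eq_mul]

/-- `J_L`: the kernel of the map `F[S] → F[L]` induced by the projection. -/
noncomputable def JL : Submodule F (MonoidAlgebra F RB) :=
  LinearMap.ker ((Finsupp.lmapDomain F F (Prod.fst : RB → L2)) ∘ₗ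
    (MonoidAlgebra.coeffLinearEquiv F).toLinearMap)

/-- `J_R`: the kernel of the map `F[S] → F[R]` induced by the projection. -/
noncomputable def JR : Submodule F (MonoidAlgebra F RB) :=
  LinearMap.ker ((Finsupp.lmapDomain F F (Prod.snd : RB → R2)) ∘ₗ
    (MonoidAlgebra.coeffLinearEquiv F).toLinearMap)

/-- The element `C = (a₁,b₁) − (a₁,b₂) − (a₂,b₁) + (a₂,b₂)`. -/
noncomputable def Celt : MonoidAlgebra F RB :=
  MonoidAlgebra.single (L2.a1, R2.b1) 1 - MonoidAlgebra.single (L2.a1, R2.b2) 1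
    - MonoidAlgebra.single (L2.a2, R2.b1) 1 + MonoidAlgebra.single (L2.a2, R2.b2) 1

/-- `ϱ_J`: the restriction to `S` of the congruence on `F[S]` induced by `J`. -/
def rho (J : Submodule F (MonoidAlgebra F RB)) : RB → RB → Prop :=
  fun s t => MonoidAlgebra.single s (1 : F) - MonoidAlgebra.single t (1 : F) ∈ J

/-! A difference `x·(a,b) − (a',b)·x·(a,b)` with `a' ≠ a` is `c • ((a,b) − (a',b))`, where `c` is
the coefficient at `a` of the image of `x` in `F[L]`. Hence an ideal `J ⊄ J_L` relates any two
elements of `S` with equal second coordinates, and symmetrically for `J ⊄ J_R`. If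
`s ϱ_{J₁+J₂} t` and `s.1 ≠ t.1`, then `J₁ + J₂ ⊄ J_L`, so some `Jᵢ ⊄ J_L` and `s ϱ_{Jᵢ} (t.1, s.2)`;
likewise `(t.1, s.2)` is related to `t`. The other inclusion holds because `ϱ_J` is a congruence
for every ideal `J`. -/

open MonoidAlgebra

theorem IsTwoSidedIdeal.sup {K A : Type*} [Field K] [NonUnitalNonAssocSemiring A] [Module K A]
    {J₁ J₂ : Submodule K A} (h₁ : IsTwoSidedIdeal J₁) (h₂ : IsTwoSidedIdeal J₂) :
    IsTwoSidedIdeal (J₁ ⊔ J₂) := by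
  intro a x hx
  obtain ⟨y, hy, z, hz, rfl⟩ := Submodule.mem_sup.mp hx
  rw [mul_add, add_mul]
  exact ⟨Submodule.add_mem_sup (h₁ a y hy).1 (h₂ a z hz).1,
    Submodule.add_mem_sup (h₁ a y hy).2 (h₂ a z hz).2⟩

theorem L2.mul_def (a a' : L2) : a * a' = a := rfl

theorem R2.mul_def (b b' : R2) : b * b' = b' := rfl

section

variable {F}

noncomputable def projL : MonoidAlgebra F RB →ₗ[F] L2 →₀ F :=
  Finsupp.lmapDomain F F Prod.fst ∘ₗ (coeffLinearEquiv F).toLinearMap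

noncomputable def projR : MonoidAlgebra F RB →ₗ[F] R2 →₀ F :=
  Finsupp.lmapDomain F F Prod.snd ∘ₗ (coeffLinearEquiv F).toLinearMap

theorem mem_JL_iff {x : MonoidAlgebra F RB} : x ∈ JL F ↔ projL x = 0 := Iff.rfl

theorem mem_JR_iff {x : MonoidAlgebra F RB} : x ∈ JR F ↔ projR x = 0 := Iff.rfl

theorem projL_single (s : RB) (c : F) : projL (single s c) = Finsupp.single s.1 c :=
  Finsupp.mapDomain_single

theorem projR_single (s : RB) (c : F) : projR (single s c) = Finsupp.single s.2 c :=
  Finsupp.mapDomain_single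

theorem coeffSum_single (s : RB) (c : F) : coeffSum F (single s c) = c := by
  simp [coeffSum]

theorem mul_single_sub_single_mul_mul_single {a a' : L2} (h : a ≠ a') (b : R2)
    (x : MonoidAlgebra F RB) :
    x * single (a, b) 1 - single (a', b) 1 * x * single (a, b) 1
      = projL x a • (single (a, b) 1 - single (a', b) 1) := by
  induction x using MonoidAlgebra.induction_linear with
  | zero => simp
  | add x y hx hy => simp only [add_mul, mul_add, add_sub_add_comm, hx, hy, map_add,
      Finsupp.add_apply, add_smul]
  | single u c =>
    obtain ⟨a'', b''⟩ := u
    cases a <;> cases a' <;> cases a'' <;>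
      simp_all [single_mul_single, L2.mul_def, R2.mul_def, projL_single, smul_sub]

theorem single_mul_sub_single_mul_mul_single {b b' : R2} (h : b ≠ b') (a : L2)
    (x : MonoidAlgebra F RB) :
    single (a, b) 1 * x - single (a, b) 1 * x * single (a, b') 1
      = projR x b • (single (a, b) 1 - single (a, b') 1) := by
  induction x using MonoidAlgebra.induction_linear with
  | zero => simp
  | add x y hx hy => simp only [add_mul, mul_add, add_sub_add_comm, hx, hy, map_add,
      Finsupp.add_apply, add_smul]
  | single u c =>
    obtain ⟨a'', b''⟩ := u
    cases b <;> cases b' <;> cases b'' <;>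
      simp_all [single_mul_single, L2.mul_def, R2.mul_def, projR_single, smul_sub]

theorem rho_self (J : Submodule F (MonoidAlgebra F RB)) (s : RB) : rho F J s s := by
  simp [rho]

def rhoCon {J : Submodule F (MonoidAlgebra F RB)} (hJ : IsTwoSidedIdeal J) : Con RB where
  r := rho F J
  iseqv :=
    { refl := rho_self J
      symm := fun h => by rw [rho, ← neg_sub]; exact J.neg_mem h
      trans := fun h₁ h₂ => by simpa [rho] using J.add_mem h₁ h₂ }
  mul' := by
    intro w x y z hwx hyz
    have h : single (w * y) (1 : F) - single (x * z) 1
        = single w 1 * (single y 1 - single z 1) + (single w 1 - single x 1) * single z 1 := by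
      simp only [mul_sub, sub_mul, single_mul_single, mul_one]
      abel
    rw [rho, h]
    exact J.add_mem (hJ _ _ hyz).1 (hJ _ _ hwx).2

theorem rho_bot_iff (s t : RB) : rho F ⊥ s t ↔ s = t := by
  rw [rho, Submodule.mem_bot, sub_eq_zero, single_left_inj one_ne_zero]

theorem rho_JL_iff (s t : RB) : rho F (JL F) s t ↔ s.1 = t.1 := by
  rw [rho, mem_JL_iff, map_sub, projL_single, projL_single, sub_eq_zero,
    Finsupp.single_left_inj one_ne_zero]

theorem rho_JR_iff (s t : RB) : rho F (JR F) s t ↔ s.2 = t.2 := by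
  rw [rho, mem_JR_iff, map_sub, projR_single, projR_single, sub_eq_zero,
    Finsupp.single_left_inj one_ne_zero]

theorem rho_inf_iff (J J' : Submodule F (MonoidAlgebra F RB)) (s t : RB) :
    rho F (J ⊓ J') s t ↔ rho F J s t ∧ rho F J' s t :=
  Submodule.mem_inf

theorem rho_ker_coeffSum (s t : RB) : rho F (LinearMap.ker (coeffSum F)) s t := by
  rw [rho, LinearMap.mem_ker, map_sub, coeffSum_single, coeffSum_single, sub_self]

variable {J : Submodule F (MonoidAlgebra F RB)}

theorem rho_of_not_le_JL (hJ : IsTwoSidedIdeal J) (h : ¬ J ≤ JL F) (a a' : L2) (b : R2) :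
    rho F J (a, b) (a', b) := by
  obtain ⟨x, hxJ, hxL⟩ := SetLike.not_le_iff_exists.mp h
  obtain ⟨c, hc⟩ : ∃ c, projL x c ≠ 0 := by
    by_contra! h0
    exact hxL (mem_JL_iff.mpr (Finsupp.ext h0))
  have hc_rel : ∀ c', rho F J (c, b) (c', b) := by
    intro c'
    rcases eq_or_ne c c' with rfl | hne
    · exact rho_self J _
    refine (Submodule.smul_mem_iff _ hc).mp ?_
    rw [← mul_single_sub_single_mul_mul_single hne]
    exact J.sub_mem (hJ _ _ hxJ).2 (hJ _ _ (hJ _ _ hxJ).1).2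
  simpa [rho] using J.sub_mem (hc_rel a') (hc_rel a)

theorem rho_of_not_le_JR (hJ : IsTwoSidedIdeal J) (h : ¬ J ≤ JR F) (a : L2) (b b' : R2) :
    rho F J (a, b) (a, b') := by
  obtain ⟨x, hxJ, hxR⟩ := SetLike.not_le_iff_exists.mp h
  obtain ⟨c, hc⟩ : ∃ c, projR x c ≠ 0 := by
    by_contra! h0
    exact hxR (mem_JR_iff.mpr (Finsupp.ext h0))
  have hc_rel : ∀ c', rho F J (a, c) (a, c') := by
    intro c'
    rcases eq_or_ne c c' with rfl | hne
    · exact rho_self J _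
    refine (Submodule.smul_mem_iff _ hc).mp ?_
    rw [← single_mul_sub_single_mul_mul_single hne]
    exact J.sub_mem (hJ _ _ hxJ).1 (hJ _ _ (hJ _ _ hxJ).1).2
  simpa [rho] using J.sub_mem (hc_rel b') (hc_rel b)

variable {J₁ J₂ : Submodule F (MonoidAlgebra F RB)}

theorem rho_sup_fst (h₁ : IsTwoSidedIdeal J₁) (h₂ : IsTwoSidedIdeal J₂) {s t : RB}
    (hst : rho F (J₁ ⊔ J₂) s t) : rho F J₁ s (t.1, s.2) ∨ rho F J₂ s (t.1, s.2) := by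
  by_cases hs : s.1 = t.1
  · exact .inl (hs ▸ rho_self J₁ s)
  have hL : ¬ J₁ ⊔ J₂ ≤ JL F := fun hle => hs ((rho_JL_iff s t).mp (hle hst))
  rw [sup_le_iff, not_and_or] at hL
  exact hL.imp (fun h => rho_of_not_le_JL h₁ h _ _ _) (fun h => rho_of_not_le_JL h₂ h _ _ _)

theorem rho_sup_snd (h₁ : IsTwoSidedIdeal J₁) (h₂ : IsTwoSidedIdeal J₂) {s t : RB}
    (hst : rho F (J₁ ⊔ J₂) s t) : rho F J₁ (t.1, s.2) t ∨ rho F J₂ (t.1, s.2) t := by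
  by_cases hs : s.2 = t.2
  · exact .inl (hs ▸ rho_self J₁ t)
  have hR : ¬ J₁ ⊔ J₂ ≤ JR F := fun hle => hs ((rho_JR_iff s t).mp (hle hst))
  rw [sup_le_iff, not_and_or] at hR
  exact hR.imp (fun h => rho_of_not_le_JR h₁ h _ _ _) (fun h => rho_of_not_le_JR h₂ h _ _ _)

end

/-- For the 2x2 rectangular band `S`: the map `φ : J ↦ ϱ_J` sends `{0}` and
`J_L ∩ J_R` to the identity congruence, `J_L` to `α_L`, `J_R` to `α_R`, and both
the augmentation ideal `F[ω_S]` and `F[S]` to the universal congruence; moreover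
`φ(J₁ + J₂) = φ(J₁) ∨ φ(J₂)` for all ideals `J₁, J₂` (the join being taken in
the congruence lattice of `S`). -/
theorem rectangularBand_rho_join_hom :
    (∀ s t : RB, rho F ⊥ s t ↔ s = t) ∧
    (∀ s t : RB, rho F (JL F ⊓ JR F) s t ↔ s = t) ∧
    (∀ s t : RB, rho F (JL F) s t ↔ s.1 = t.1) ∧
    (∀ s t : RB, rho F (JR F) s t ↔ s.2 = t.2) ∧
    (∀ s t : RB, rho F (LinearMap.ker (coeffSum F)) s t) ∧
    (∀ s t : RB, rho F (⊤ : Submodule F (MonoidAlgebra F RB)) s t) ∧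
    (∀ J₁ J₂ : Submodule F (MonoidAlgebra F RB),
      IsTwoSidedIdeal J₁ → IsTwoSidedIdeal J₂ →
        ∀ s t : RB, rho F (J₁ ⊔ J₂) s t ↔
          conGen (fun x y => rho F J₁ x y ∨ rho F J₂ x y) s t) := by
  refine ⟨rho_bot_iff, fun s t => ?_, rho_JL_iff, rho_JR_iff, rho_ker_coeffSum,
    fun _ _ => Submodule.mem_top, fun J₁ J₂ h₁ h₂ s t => ⟨fun hst => ?_, fun hst => ?_⟩⟩
  · rw [rho_inf_iff, rho_JL_iff, rho_JR_iff, Prod.ext_iff]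
  · exact (conGen _).trans (ConGen.Rel.of _ _ (rho_sup_fst h₁ h₂ hst))
      (ConGen.Rel.of _ _ (rho_sup_snd h₁ h₂ hst))
  · refine (Con.conGen_le (c := rhoCon (h₁.sup h₂))).mpr (fun _ _ h => ?_) hst
    exact h.elim Submodule.mem_sup_left Submodule.mem_sup_right
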